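/- For every function f : m × m → n ∪ {∞}: Γ_f(∞) ⊆ Γ_f^⊥, and Γ_f(∞) is dense in Γ_f^⊥, i.e. for every infinite x ∈ Γ_f^⊥ there exists an infinite x' ⊆ x with x' ∈ Γ_f(∞). Consequently, Γ_f^⊥ consists only of finite sets if and only if ∞ is not in the range of f. -/

import Mathlib

open Classical

/-! ### Gaps on countable sets -/

/-- `a ⊆* b` : `a` is almost contained in `b`. -/
def AlmostSubset {N : Type} (a b : Set N) : Prop := (a \ b).Finite

/-- An ideal on `N`: nonempty, closed under finite unions and subsets, and
containing all finite sets. -/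
def IsIdealOn {N : Type} (I : Set (Set N)) : Prop :=
  I.Nonempty ∧ (∀ a ∈ I, ∀ b ∈ I, a ∪ b ∈ I) ∧ (∀ a ∈ I, ∀ b, b ⊆ a → b ∈ I) ∧
    ∀ a : Set N, a.Finite → a ∈ I

/-- The orthogonal `I^⊥` of a family of sets. -/
def perp {N : Type} (I : Set (Set N)) : Set (Set N) := {a | ∀ b ∈ I, (a ∩ b).Finite}

/-- `a ≥ I` : every member of `I` is almost contained in `a`. -/
def AboveIdeal {N : Type} (a : Set N) (I : Set (Set N)) : Prop := ∀ b ∈ I, (b \ a).Finite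

/-- A family of ideals indexed by `ι` forms a multiple gap. -/
def IsGapFam {ι N : Type} (Γ : ι → Set (Set N)) : Prop :=
  (∀ i, IsIdealOn (Γ i)) ∧
  (∀ i j, i ≠ j → ∀ a ∈ Γ i, ∀ b ∈ Γ j, (a ∩ b).Finite) ∧
  ∀ a : ι → Set N, (∀ i, AboveIdeal (a i) (Γ i)) → (⋂ i, a i).Infinite

/-- Weak countable separation of a family of ideals. -/
def WeaklyCountablySeparated {ι N : Type} (Γ : ι → Set (Set N)) : Prop :=
  ∃ C : Set (Set N), C.Countable ∧ (∀ c ∈ C, c.Infinite) ∧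
    ∀ x : ι → Set N, (∀ i, x i ∈ Γ i) →
      ∃ c : ι → Set N, (∀ i, c i ∈ C) ∧ (∀ i, AlmostSubset (x i) (c i)) ∧ (⋂ i, c i).Finite

/-- A strong multiple gap: a gap which is not weakly countably separated. -/
def IsStrongGapFam {ι N : Type} (Γ : ι → Set (Set N)) : Prop :=
  IsGapFam Γ ∧ ¬ WeaklyCountablySeparated Γ

/-- The identification of the Cantor space `N → Bool` with `𝒫(N)`. -/
def setOfFun {N : Type} (f : N → Bool) : Set N := {x | f x = true}

/-- A family of subsets of `N` is analytic if the corresponding subset of the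
Cantor space `N → Bool` is an analytic set. -/
def IsAnalyticFamily {N : Type} (I : Set (Set N)) : Prop :=
  MeasureTheory.AnalyticSet (setOfFun ⁻¹' I)

/-- A family of subsets of `N` is Souslin measurable if the corresponding subset of
the Cantor space belongs to the σ-algebra generated by the analytic sets. -/
def SouslinMeasurableFamily {N : Type} (S : Set (Set N)) : Prop :=
  @MeasurableSet _ (MeasurableSpace.generateFrom
    {A : Set (N → Bool) | MeasureTheory.AnalyticSet A}) (setOfFun ⁻¹' S)

/-- An analytic strong `n`-gap. -/
def IsAnalyticStrongGap {N : Type} (n : ℕ) (Γ : Fin n → Set (Set N)) : Prop :=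
  IsStrongGapFam Γ ∧ ∀ i, IsAnalyticFamily (Γ i)

/-- `Γ ≤ Γ'` for `n`-gaps. -/
def GapLE {N N' : Type} {n : ℕ} (Γ : Fin n → Set (Set N)) (Γ' : Fin n → Set (Set N')) : Prop :=
  ∃ φ : N → N', Function.Injective φ ∧
    (∀ i, ∀ x ∈ Γ i, φ '' x ∈ Γ' i) ∧
    ∀ x ∈ perp (⋃ i, Γ i), φ '' x ∈ perp (⋃ i, Γ' i)

/-- A minimal analytic strong `n`-gap. -/
def IsMinimalStrongGap {N : Type} (n : ℕ) (Γ : Fin n → Set (Set N)) : Prop :=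
  IsAnalyticStrongGap n Γ ∧
  ∀ (N' : Type) [Countable N'] (Γ' : Fin n → Set (Set N')),
    IsAnalyticStrongGap n Γ' → GapLE Γ' Γ → GapLE Γ Γ'

/-! ### Trees, chains and combs -/

/-- A `u`-chain in the tree `ι^{<ω}`. -/
def IsUChain {ι : Type} (u : ι) (x : Set (List ι)) : Prop :=
  ∃ s : ℕ → List ι, x = Set.range s ∧ ∀ k, (s k ++ [u]) <+: s (k + 1)

/-- A `(u,v)`-comb in the tree `ι^{<ω}`; a `(u,u)`-comb is by convention a `u`-chain. -/
def IsComb {ι : Type} (u v : ι) (x : Set (List ι)) : Prop :=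
  (u = v ∧ IsUChain u x) ∨
  (u ≠ v ∧ ∃ t s : ℕ → List ι, x = Set.range t ∧
    (∀ k, (s k ++ [u]) <+: s (k + 1)) ∧
    (∀ k, (s k ++ [v]) <+: t k) ∧
    ∀ k, (t k).length < (s (k + 1)).length)

/-- The ideal `Γ_f(i)` on `ι^{<ω}` generated by all `(u,v)`-combs with `f(u,v) = i`
(`none` plays the role of `∞`): all sets almost covered by finitely many such combs. -/
def combIdeal {ι : Type} {n : ℕ} (f : ι × ι → Option (Fin n)) (i : Option (Fin n)) :
    Set (Set (List ι)) :=
  {a | ∃ F : Finset (Set (List ι)),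
      (∀ c ∈ F, ∃ u v, f (u, v) = i ∧ IsComb u v c) ∧
      (a \ ⋃ c ∈ F, c).Finite}

/-- The multiple gap `Γ_f` associated to `f : ι × ι → n ∪ {∞}`. -/
def GammaF {ι : Type} {n : ℕ} (f : ι × ι → Option (Fin n)) : Fin n → Set (Set (List ι)) :=
  fun i => combIdeal f (some i)

/-- `Inc s t p` : `inc(s,t) = p` (for `s ≠ t`). -/
def Inc {ι : Type} (s t : List ι) (p : ι × ι) : Prop :=
  (p.1 = p.2 ∧ ((s ++ [p.1]) <+: t ∨ (t ++ [p.1]) <+: s)) ∨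
  (p.1 ≠ p.2 ∧ ∃ r : List ι, (r ++ [p.1]) <+: s ∧ (r ++ [p.2]) <+: t)

/-- A reduction map `ε : ι₀² → ι₁²`. -/
def IsReductionMap {ι₀ ι₁ : Type} (ε : ι₀ × ι₀ → ι₁ × ι₁) : Prop :=
  ∃ (k : ℕ) (e : ι₀ → List ι₁) (x : List ι₁),
    Function.Injective e ∧ (∀ u, (e u).length = k) ∧ x.length < k ∧
    (∀ u v, u ≠ v → Inc (e u) (e v) (ε (u, v))) ∧
    ∀ u, Inc (e u) x (ε (u, u))

/-- A complete subtree of `ι^{<ω}`. -/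
def IsCompleteSubtree {ι : Type} (T : Set (List ι)) : Prop :=
  ∃ φ : List ι → List ι, Function.Injective φ ∧ Set.range φ = T ∧
    ∀ (s t : List ι) (u : ι), (s ++ [u]) <+: t → (φ s ++ [u]) <+: φ t

/-- `pbranch(f)`: those `k < n` attained by `f` only on the diagonal. -/
def pbranch {ι : Type} {n : ℕ} (f : ι × ι → Option (Fin n)) : Set (Fin n) :=
  {k | ∀ u v, f (u, v) = some k → u = v}

/-- `k` is `f`-attached to `l`. -/
def Attached {ι : Type} {n : ℕ} (f : ι × ι → Option (Fin n)) (k l : Option (Fin n)) : Prop :=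
  ∀ u v, u ≠ v → f (u, v) = k → f (v, u) = l

/-- `f` is `ψ`-branch-reduced. -/
def BranchReduced {ι : Type} {n : ℕ} (f : ι × ι → Option (Fin n)) (A : Set (Fin n))
    (ψ : Fin n → Fin n → Option (Fin n)) : Prop :=
  ∀ (u v : ι) (a b : Fin n), f (u, u) = some a → f (v, v) = some b →
    a ∈ A → b ∈ A → a ≠ b → f (u, v) = ψ a b

/-! ### Restrictions and clovers -/

/-- The restriction `I|_a` of an ideal on `N` to `a ⊆ N`, as an ideal on `↥a`. -/
def restrictIdeal {N : Type} (I : Set (Set N)) (a : Set N) : Set (Set ↥a) :=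
  {y | ∃ x ∈ I, y = Subtype.val ⁻¹' x}

/-- A clover. -/
def IsClover {N : Type} {n : ℕ} (Γ : Fin n → Set (Set N)) : Prop :=
  ¬ ∃ (a : Set N) (B : Set (Fin n)) (i : Fin n), i ∉ B ∧ a ∈ perp (Γ i) ∧
      IsGapFam fun j : ↥B => restrictIdeal (Γ j) a

/-! ### n-types -/

/-- The minimum of a set of `Fin n`, as an `Option`. -/
noncomputable def setMin {n : ℕ} (s : Set (Fin n)) : Option (Fin n) :=
  if h : s.Nonempty then some ((Set.toFinite s).toFinset.min' ((Set.Finite.toFinset_nonempty _).mpr h)) else none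

/-- The maximum of a set of `Fin n`, as an `Option`. -/
noncomputable def setMax {n : ℕ} (s : Set (Fin n)) : Option (Fin n) :=
  if h : s.Nonempty then some ((Set.toFinite s).toFinset.max' ((Set.Finite.toFinset_nonempty _).mpr h)) else none

/-- An `n`-type: a partition `n = A ∪ B ∪ C ∪ D ∪ E` (encoded by the labelling `part`,
with `A = part⁻¹ 0`, …, `E = part⁻¹ 4`), a map `ψ` defined on pairs of distinct elements
of `A` with values in `B ∪ {∞}` covering `B` (normalized to `none` off its domain),
a partition `P` of `C` into sets of cardinality 1 or 2, and a map `γ : D → B ∪ E ∪ {∞}`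
(normalized to `none` off `D`) with fibers over `E` of cardinality at least 2;
moreover if `A = ∅` then `B = D = E = ∅` and all members of `P` have cardinality 2. -/
structure NType (n : ℕ) where
  part : Fin n → Fin 5
  psi : Fin n → Fin n → Option (Fin n)
  P : Set (Set (Fin n))
  gam : Fin n → Option (Fin n)
  psi_dom : ∀ i j, ¬(part i = 0 ∧ part j = 0 ∧ i ≠ j) → psi i j = none
  psi_mem : ∀ i j b, part i = 0 → part j = 0 → i ≠ j → psi i j = some b → part b = 1
  psi_surj : ∀ b, part b = 1 → ∃ i j, part i = 0 ∧ part j = 0 ∧ i ≠ j ∧ psi i j = some b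
  P_sub : ∀ p ∈ P, ∀ k ∈ p, part k = 2
  P_cover : ∀ k, part k = 2 → ∃ p ∈ P, k ∈ p
  P_disj : ∀ p ∈ P, ∀ q ∈ P, p ≠ q → Disjoint p q
  P_card : ∀ p ∈ P, p.ncard = 1 ∨ p.ncard = 2
  gam_dom : ∀ k, part k ≠ 3 → gam k = none
  gam_mem : ∀ k b, part k = 3 → gam k = some b → part b = 1 ∨ part b = 4
  gam_fiber : ∀ b, part b = 4 → 2 ≤ {k | part k = 3 ∧ gam k = some b}.ncard
  A_empty : (∀ i, part i ≠ 0) → (∀ i, part i = 2) ∧ ∀ p ∈ P, p.ncard = 2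

/-- The index set `M = A* ∪ P ∪ D` associated to an `n`-type, where `A* = A`
if `A ≠ ∅` and `A*` is a single extra point (`root`) if `A = ∅`. -/
inductive NType.Idx {n : ℕ} (α : NType n) : Type
  | ofA (i : Fin n) (h : α.part i = 0) : NType.Idx α
  | root (h : ∀ i, α.part i ≠ 0) : NType.Idx α
  | ofP (s : Set (Fin n)) (h : s ∈ α.P) : NType.Idx α
  | ofD (i : Fin n) (h : α.part i = 3) : NType.Idx α

/-- Whether an element of `M` belongs to `A*`. -/
def NType.Idx.isAst {n : ℕ} {α : NType n} : α.Idx → Prop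
  | .ofA _ _ => True
  | .root _ => True
  | .ofP _ _ => False
  | .ofD _ _ => False

/-- The map `σ : M → n`: the identity on `A* ∪ D` and the minimum on members of `P`. -/
noncomputable def NType.sigma {n : ℕ} (α : NType n) : α.Idx → Option (Fin n)
  | .ofA i _ => some i
  | .root _ => if h : 0 < n then some ⟨0, h⟩ else none
  | .ofP s _ => setMin s
  | .ofD i _ => some i

/-- The map `τ`: `γ` on `D` and the maximum on members of `P` (junk elsewhere). -/
noncomputable def NType.tau {n : ℕ} (α : NType n) : α.Idx → Option (Fin n)
  | .ofA i _ => some i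
  | .root _ => none
  | .ofP s _ => setMax s
  | .ofD i _ => α.gam i

open Classical in
/-- The function `f^α : M × M → n ∪ {∞}` associated to an `n`-type `α`. -/
noncomputable def NType.fA {n : ℕ} (α : NType n) (q : α.Idx × α.Idx) : Option (Fin n) :=
  if q.1 = q.2 then α.sigma q.1
  else
    match q.1, q.2 with
    | .ofA i' _, .ofA j' _ => α.psi i' j'
    | i, j =>
      if i.isAst then α.tau j
      else if j.isAst then α.sigma i
      else if ∃ si sj, α.sigma i = some si ∧ α.sigma j = some sj ∧ si < sj then α.sigma i
      else α.tau j
/-! If `x` is shorter than `y` and both lie in a `(u,v)`-comb, then `inc(y, x) = (u, v)`. Since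
`inc` is a function of the pair, combs of different types meet in at most one point, which makes
`Γ_f(∞)` orthogonal to every `Γ_f(i)`.

For density: an infinite `X ⊆ m^{<ω}` has, by König's lemma, a branch all of whose nodes have
infinitely many extensions in `X`. Infinitely often an element of `X` leaves the branch at a node
(or is that node), and pigeonholing the branch letter against the letter by which it leaves yields
a comb inside `X`. A comb inside a set orthogonal to all `Γ_f(i)` has type `∞`. -/

theorem Set.Infinite.exists_seq_sparse {K : Set ℕ} (hK : K.Infinite) (g : ℕ → ℕ) :
    ∃ φ : ℕ → ℕ, (∀ i, φ i ∈ K) ∧ ∀ i, g (φ i) < φ (i + 1) := by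
  choose next hmem hlt using hK.exists_gt
  exact ⟨fun i => Nat.rec (next 0) (fun _ k => next (g k)) i, fun i => by cases i <;> apply hmem,
    fun i => hlt _⟩

section Trees

variable {α : Type}

theorem snoc_prefix_unique {r y : List α} {u v : α} (hu : r ++ [u] <+: y) (hv : r ++ [v] <+: y) :
    u = v := by
  simpa using (List.prefix_of_prefix_length_le hu hv (by simp)).eq_of_length (by simp)

theorem exists_snoc_prefix_of_prefix_of_ne {r x : List α} (h : r <+: x) (hne : x ≠ r) :
    ∃ u, r ++ [u] <+: x := by
  obtain ⟨_ | ⟨u, d⟩, rfl⟩ := h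
  · simp at hne
  · exact ⟨u, d, by simp⟩

theorem prefix_of_le_of_prefix_succ {s : ℕ → List α} (hs : ∀ k, s k <+: s (k + 1)) {k l : ℕ}
    (hkl : k ≤ l) : s k <+: s l := by
  induction hkl with
  | refl => exact List.prefix_refl _
  | step _ ih => exact ih.trans (hs _)

theorem snoc_prefix_of_lt {s : ℕ → List α} {u : α} (hs : ∀ k, s k ++ [u] <+: s (k + 1))
    {k l : ℕ} (hkl : k < l) : s k ++ [u] <+: s l :=
  (hs k).trans <| prefix_of_le_of_prefix_succ (fun j => (List.prefix_append _ _).trans (hs j)) hkl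

theorem eq_of_snoc_prefix_of_length_lt {r r' s t : List α} {u v : α} (hs : r ++ [u] <+: s)
    (ht : r ++ [v] <+: t) (hr's : r' <+: s) (hr't : r' <+: t) (hlt : r.length < r'.length) :
    u = v :=
  snoc_prefix_unique (List.prefix_of_prefix_length_le hs hr's (by simpa))
    (List.prefix_of_prefix_length_le ht hr't (by simpa))

theorem Inc.unique {s t : List α} {p q : α × α} (hp : Inc s t p) (hq : Inc s t q) : p = q := by
  obtain ⟨u, v⟩ := p
  obtain ⟨u', v'⟩ := q
  simp only [Inc] at hp hq
  rcases hp with ⟨rfl, hst | hts⟩ | ⟨huv, r, hrs, hrt⟩ <;>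
    rcases hq with ⟨rfl, hst' | hts'⟩ | ⟨huv', r', hrs', hrt'⟩
  · rw [snoc_prefix_unique hst hst']
  · have h₁ := hst.length_le
    have h₂ := hts'.length_le
    simp only [List.length_append, List.length_singleton] at h₁ h₂
    omega
  · exact absurd (snoc_prefix_unique (hrs'.trans ((List.prefix_append _ _).trans hst)) hrt') huv'
  · have h₁ := hst'.length_le
    have h₂ := hts.length_le
    simp only [List.length_append, List.length_singleton] at h₁ h₂
    omega
  · rw [snoc_prefix_unique hts hts']
  · exact absurd (snoc_prefix_unique hrs' (hrt'.trans ((List.prefix_append _ _).trans hts))) huv'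
  · exact absurd (snoc_prefix_unique (hrs.trans ((List.prefix_append _ _).trans hst')) hrt) huv
  · exact absurd (snoc_prefix_unique hrs (hrt.trans ((List.prefix_append _ _).trans hts'))) huv
  · rcases lt_trichotomy r.length r'.length with hlt | heq | hlt
    · exact absurd (eq_of_snoc_prefix_of_length_lt hrs hrt ((List.prefix_append _ _).trans hrs')
        ((List.prefix_append _ _).trans hrt') hlt) huv
    · have hr : r = r' := (List.prefix_of_prefix_length_le ((List.prefix_append _ _).trans hrs)
        ((List.prefix_append _ _).trans hrs') heq.le).eq_of_length heq
      subst hr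
      rw [snoc_prefix_unique hrs hrs', snoc_prefix_unique hrt hrt']
    · exact absurd (eq_of_snoc_prefix_of_length_lt hrs' hrt' ((List.prefix_append _ _).trans hrs)
        ((List.prefix_append _ _).trans hrt) hlt) huv'

theorem IsComb.exists_seq {u v : α} {c : Set (List α)} (h : IsComb u v c) :
    ∃ t : ℕ → List α, c = Set.range t ∧ StrictMono (fun k => (t k).length) ∧
      ∀ k l, k < l → Inc (t l) (t k) (u, v) := by
  rcases h with ⟨rfl, s, rfl, hs⟩ | ⟨huv, t, s, rfl, hs, hst, hlen⟩
  · refine ⟨s, rfl, strictMono_nat_of_lt_succ fun k => ?_,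
      fun k l hkl => Or.inl ⟨rfl, Or.inr (snoc_prefix_of_lt hs hkl)⟩⟩
    simpa using (hs k).length_le
  · refine ⟨t, rfl, strictMono_nat_of_lt_succ fun k => (hlen k).trans_le ?_,
      fun k l hkl => Or.inr ⟨huv, s k, (snoc_prefix_of_lt hs hkl).trans
        ((List.prefix_append _ _).trans (hst l)), hst k⟩⟩
    simpa using ((List.prefix_append _ [v]).trans (hst (k + 1))).length_le

theorem IsComb.infinite {u v : α} {c : Set (List α)} (h : IsComb u v c) : c.Infinite := by
  obtain ⟨t, rfl, ht, -⟩ := h.exists_seq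
  exact Set.infinite_range_of_injective (Function.Injective.of_comp ht.injective)

theorem IsComb.inter_subsingleton {u v u' v' : α} {c c' : Set (List α)} (h : IsComb u v c)
    (h' : IsComb u' v' c') (hne : (u, v) ≠ (u', v')) : (c ∩ c').Subsingleton := by
  obtain ⟨t, rfl, ht, hinc⟩ := h.exists_seq
  obtain ⟨t', rfl, ht', hinc'⟩ := h'.exists_seq
  have hshorter : ∀ x ∈ Set.range t ∩ Set.range t', ∀ y ∈ Set.range t ∩ Set.range t',
      ¬ x.length < y.length := by
    rintro _ ⟨⟨k, rfl⟩, ⟨k', hk'⟩⟩ _ ⟨⟨l, rfl⟩, ⟨l', hl'⟩⟩ hlt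
    have hkl' : k' < l' := ht'.lt_iff_lt.mp (by simpa only [hk', hl'])
    exact hne ((hinc k l (ht.lt_iff_lt.mp hlt)).unique (hk' ▸ hl' ▸ hinc' k' l' hkl'))
  rintro x hx y hy
  obtain ⟨k, rfl⟩ := hx.1
  obtain ⟨l, rfl⟩ := hy.1
  exact congrArg t (ht.injective (le_antisymm (not_lt.mp (hshorter _ hy _ hx))
    (not_lt.mp (hshorter _ hx _ hy))))

theorem exists_isComb (u v : α) : ∃ c : Set (List α), IsComb u v c := by
  rcases eq_or_ne u v with rfl | huv
  · exact ⟨_, Or.inl ⟨rfl, fun k => List.replicate k u, rfl, fun k => by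
      rw [← List.replicate_succ']⟩⟩
  · refine ⟨_, Or.inr ⟨huv, fun k => List.replicate (2 * k) u ++ [v],
      fun k => List.replicate (2 * k) u, rfl, fun k => ⟨[u], ?_⟩, fun k => List.prefix_refl _,
      fun k => by simp; omega⟩⟩
    simp [mul_add, List.replicate_add]

theorem exists_branch_infinite [Finite α] {X : Set (List α)} (hX : X.Infinite) :
    ∃ (r : ℕ → List α) (b : ℕ → α), (∀ k, (r k).length = k) ∧
      (∀ k, r (k + 1) = r k ++ [b k]) ∧ ∀ k, {x ∈ X | r k <+: x}.Infinite := by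
  set B := {r : List α | {x ∈ X | r <+: x}.Infinite}
  have hroot : [] ∈ B := by simpa [B] using hX
  have hchild : ∀ r ∈ B, ∃ u, r ++ [u] ∈ B := by
    intro r hr
    by_contra! hfin
    refine hr (((Set.finite_iUnion fun u => Set.not_infinite.mp (hfin u)).insert r).subset ?_)
    rintro x ⟨hx, hrx⟩
    rcases eq_or_ne x r with rfl | hne
    · exact Set.mem_insert _ _
    · obtain ⟨u, hu⟩ := exists_snoc_prefix_of_prefix_of_ne hrx hne
      exact Set.mem_insert_of_mem _ (Set.mem_iUnion.mpr ⟨u, hx, hu⟩)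
  have : Nonempty α := (hchild [] hroot).nonempty
  choose! b hb using hchild
  let r : ℕ → List α := fun k => (fun s => s ++ [b s])^[k] []
  have hsucc : ∀ k, r (k + 1) = r k ++ [b (r k)] := fun k => Function.iterate_succ_apply' _ _ _
  have hrB : ∀ k, r k ∈ B := by
    intro k
    induction k with
    | zero => exact hroot
    | succ k ih => rw [hsucc]; exact hb _ ih
  refine ⟨r, fun k => b (r k), fun k => ?_, hsucc, hrB⟩
  induction k with
  | zero => rfl
  | succ k ih => simp [hsucc, ih]

theorem exists_prefix_not_prefix_succ {r : ℕ → List α} (hlen : ∀ k, (r k).length = k) {K : ℕ}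
    {y : List α} (hy : r K <+: y) : ∃ k, K ≤ k ∧ r k <+: y ∧ ¬ r (k + 1) <+: y := by
  by_contra! hstay
  have hall : ∀ k, K ≤ k → r k <+: y := fun k hk =>
    Nat.le_induction hy (fun k hKk ih => hstay k hKk ih) k hk
  have := (hall (K + y.length + 1) (by omega)).length_le
  rw [hlen] at this
  omega

theorem isComb_range_of_branch {r : ℕ → List α} {b : ℕ → α}
    (hsucc : ∀ k, r (k + 1) = r k ++ [b k]) (hlen : ∀ k, (r k).length = k) {u v : α}
    {φ : ℕ → ℕ} {t : ℕ → List α}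
    (hb : ∀ i, b (φ i) = u) (ht : ∀ i, (u = v ∧ t i = r (φ i)) ∨ (u ≠ v ∧ r (φ i) ++ [v] <+: t i))
    (hsparse : ∀ i, (t i).length < φ (i + 1)) : IsComb u v (Set.range t) := by
  have hle : ∀ i, φ i + 1 ≤ φ (i + 1) := by
    intro i
    have : φ i ≤ (t i).length := by
      rcases ht i with ⟨-, hti⟩ | ⟨-, hti⟩
      · rw [hti, hlen]
      · simpa [hlen] using ((List.prefix_append _ _).trans hti).length_le
    have := hsparse i
    omega
  have hchain : ∀ i, r (φ i) ++ [u] <+: r (φ (i + 1)) := fun i => by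
    rw [← hb i, ← hsucc]
    exact prefix_of_le_of_prefix_succ (fun k => hsucc k ▸ List.prefix_append _ _) (hle i)
  rcases eq_or_ne u v with rfl | huv
  · have ht' : t = r ∘ φ := funext fun i => ((ht i).resolve_right (by simp)).2
    exact Or.inl ⟨rfl, r ∘ φ, by rw [ht'], hchain⟩
  · exact Or.inr ⟨huv, t, r ∘ φ, rfl, hchain, fun i => ((ht i).resolve_left (by simp [huv])).2,
      fun i => by simpa [hlen] using hsparse i⟩

theorem exists_isComb_subset [Finite α] {X : Set (List α)} (hX : X.Infinite) :
    ∃ u v c, IsComb u v c ∧ c ⊆ X := by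
  obtain ⟨r, b, hlen, hsucc, hbranch⟩ := exists_branch_infinite hX
  -- `k ∈ S (u, v)`: the branch continues from `r k` by `u`, and some element of `X` equals `r k`
  -- (if `u = v`) or leaves the branch there through `r k ++ [v]` (if `u ≠ v`).
  let S : α × α → Set ℕ := fun p => {k | b k = p.1 ∧ ∃ y ∈ X,
    (p.1 = p.2 ∧ y = r k) ∨ (p.1 ≠ p.2 ∧ r k ++ [p.2] <+: y)}
  have hexits : ∀ K, ∃ k ∈ ⋃ p, S p, K < k := by
    intro K
    obtain ⟨y, hyX, hy⟩ := (hbranch (K + 1)).nonempty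
    obtain ⟨k, hKk, hky, hk⟩ := exists_prefix_not_prefix_succ hlen hy
    refine ⟨k, ?_, hKk⟩
    rcases eq_or_ne y (r k) with rfl | hne
    · exact Set.mem_iUnion.mpr ⟨(b k, b k), rfl, _, hyX, Or.inl ⟨rfl, rfl⟩⟩
    · obtain ⟨v, hv⟩ := exists_snoc_prefix_of_prefix_of_ne hky hne
      have hvb : b k ≠ v := fun hbv => hk (by rwa [hsucc, hbv])
      exact Set.mem_iUnion.mpr ⟨(b k, v), rfl, y, hyX, Or.inr ⟨hvb, hv⟩⟩
  obtain ⟨⟨u, v⟩, hSinf⟩ : ∃ p, (S p).Infinite := by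
    by_contra! hfin
    exact Set.infinite_of_forall_exists_gt hexits (Set.finite_iUnion hfin)
  choose! y hyX hy using fun k (hk : k ∈ S (u, v)) => hk.2
  obtain ⟨φ, hφS, hφ⟩ := hSinf.exists_seq_sparse fun k => (y k).length
  refine ⟨u, v, _, isComb_range_of_branch hsucc hlen (fun i => (hφS i).1)
    (fun i => hy _ (hφS i)) hφ, ?_⟩
  rintro _ ⟨i, rfl⟩
  exact hyX _ (hφS i)

end Trees

section Ideals

variable {ι : Type} {n : ℕ}

theorem IsComb.mem_combIdeal (f : ι × ι → Option (Fin n)) {u v : ι} {c : Set (List ι)}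
    (h : IsComb u v c) : c ∈ combIdeal f (f (u, v)) :=
  ⟨{c}, by simpa using ⟨u, v, rfl, h⟩, by simp⟩

theorem combIdeal_inter_finite (f : ι × ι → Option (Fin n)) {i j : Option (Fin n)} (hij : i ≠ j)
    {a b : Set (List ι)} (ha : a ∈ combIdeal f i) (hb : b ∈ combIdeal f j) : (a ∩ b).Finite := by
  obtain ⟨F, hF, haF⟩ := ha
  obtain ⟨G, hG, hbG⟩ := hb
  have hcross : ∀ c ∈ F, ∀ c' ∈ G, (c ∩ c').Finite := by
    intro c hc c' hc'
    obtain ⟨u, v, rfl, hcomb⟩ := hF c hc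
    obtain ⟨u', v', rfl, hcomb'⟩ := hG c' hc'
    exact (hcomb.inter_subsingleton hcomb' fun he => hij (by rw [he])).finite
  refine ((haF.union hbG).union (F.finite_toSet.biUnion fun c hc =>
    G.finite_toSet.biUnion fun c' hc' => hcross c hc c' hc')).subset ?_
  rintro x ⟨hxa, hxb⟩
  simp only [Set.mem_union, Set.mem_sdiff, Set.mem_iUnion, Set.mem_inter_iff, Finset.mem_coe,
    exists_prop]
  tauto

theorem IsComb.eq_none_of_subset_mem_perp {f : ι × ι → Option (Fin n)} {u v : ι}
    {c a : Set (List ι)} (h : IsComb u v c) (hca : c ⊆ a) (ha : a ∈ perp (⋃ i, GammaF f i)) :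
    f (u, v) = none := by
  cases hf : f (u, v) with
  | none => rfl
  | some i =>
    have hc : c ∈ GammaF f i := by
      rw [GammaF, ← hf]
      exact h.mem_combIdeal f
    exact absurd (Set.inter_eq_self_of_subset_right hca ▸ ha c (Set.mem_iUnion.mpr ⟨i, hc⟩))
      h.infinite

end Ideals

/-- `Γ_f(∞)` is a dense subfamily of `Γ_f^⊥`; consequently `Γ_f^⊥` consists only of
finite sets iff `∞` is not in the range of `f`. -/
theorem gammaF_inf_dense (m n : ℕ) (f : Fin m × Fin m → Option (Fin n)) :
    combIdeal f none ⊆ perp (⋃ i, GammaF f i) ∧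
    (∀ x ∈ perp (⋃ i, GammaF f i), x.Infinite →
      ∃ x' ⊆ x, x'.Infinite ∧ x' ∈ combIdeal f none) ∧
    ((∀ a ∈ perp (⋃ i, GammaF f i), a.Finite) ↔ ∀ p, f p ≠ none) := by
  have hperp : combIdeal f none ⊆ perp (⋃ i, GammaF f i) := by
    intro a ha b hb
    obtain ⟨i, hb⟩ := Set.mem_iUnion.mp hb
    exact combIdeal_inter_finite f (Option.some_ne_none i).symm ha hb
  refine ⟨hperp, fun x hx hinf => ?_, fun hfin ⟨u, v⟩ hf => ?_, fun hf a ha => ?_⟩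
  · obtain ⟨u, v, c, hc, hcx⟩ := exists_isComb_subset hinf
    exact ⟨c, hcx, hc.infinite, hc.eq_none_of_subset_mem_perp hcx hx ▸ hc.mem_combIdeal f⟩
  · obtain ⟨c, hc⟩ := exists_isComb u v
    exact hc.infinite (hfin c (hperp (hf ▸ hc.mem_combIdeal f)))
  · by_contra hinf
    obtain ⟨u, v, c, hc, hca⟩ := exists_isComb_subset hinf
    exact hf (u, v) (hc.eq_none_of_subset_mem_perp hca ha)
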